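/- Let m ≥ n and let A ∈ ℝ^{m×n} have nonzero columns a_1,…,a_n. Then obliq(A) ≤ off(AᵀA) / min_j ‖a_j‖₂². -/

import Mathlib

open scoped BigOperators
open Matrix

/-- Euclidean norm of a vector in `ℝ^m`. -/
noncomputable def vecNorm {m : ℕ} (v : Fin m → ℝ) : ℝ :=
  Real.sqrt (∑ i, v i ^ 2)

/-- The `k`-th largest singular value of a real `m × n` matrix
(`k = 0` gives the largest). -/
noncomputable def sval {m n : ℕ} (A : Matrix (Fin m) (Fin n) ℝ) (k : Fin n) : ℝ :=
  Real.sqrt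
    (((show (Aᵀ * A).IsHermitian by simpa using Matrix.isHermitian_conjTranspose_mul_self A).eigenvalues ∘
      Tuple.sort (show (Aᵀ * A).IsHermitian by simpa using Matrix.isHermitian_conjTranspose_mul_self A).eigenvalues) k.rev)

/-- Spectral norm: the largest singular value. -/
noncomputable def specNorm {m n : ℕ} (A : Matrix (Fin m) (Fin n) ℝ) : ℝ :=
  ⨆ k, sval A k

/-- Smallest singular value. -/
noncomputable def sMin {m n : ℕ} (A : Matrix (Fin m) (Fin n) ℝ) : ℝ :=
  ⨅ k, sval A k

/-- Frobenius norm. -/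
noncomputable def frobNorm {m n : ℕ} (A : Matrix (Fin m) (Fin n) ℝ) : ℝ :=
  Real.sqrt (∑ i, ∑ j, (A i j) ^ 2)

/-- Frobenius norm of the off-diagonal part of a square matrix. -/
noncomputable def offF {n : ℕ} (M : Matrix (Fin n) (Fin n) ℝ) : ℝ :=
  frobNorm (M - Matrix.diagonal (fun i => M i i))

/-- Diagonal matrix of inverse column norms `D(A)`. -/
noncomputable def colScale {m n : ℕ} (A : Matrix (Fin m) (Fin n) ℝ) :
    Matrix (Fin n) (Fin n) ℝ :=
  Matrix.diagonal (fun j => (vecNorm (fun i => A i j))⁻¹)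

/-- Condition number `κ₂(A) = σ_max(A) / σ_min(A)`. -/
noncomputable def kappa2 {m n : ℕ} (A : Matrix (Fin m) (Fin n) ℝ) : ℝ :=
  specNorm A / sMin A

/-- One-sided scaled condition number `κ₂ᴰ(A) = κ₂(A · D(A))`. -/
noncomputable def scaledCond {m n : ℕ} (A : Matrix (Fin m) (Fin n) ℝ) : ℝ :=
  kappa2 (A * colScale A)

/-- Entrywise absolute value of a matrix. -/
def matAbs {m n : ℕ} (A : Matrix (Fin m) (Fin n) ℝ) : Matrix (Fin m) (Fin n) ℝ :=
  fun i j => |A i j|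

/-! With `B = A·D(A) = UH`, the Gram matrix `BᵀB = H²` has unit diagonal and off-diagonal
entries `(AᵀA)ᵢⱼ / (‖aᵢ‖‖aⱼ‖)`, so `‖H² - 1‖_F ≤ off(AᵀA) / minⱼ ‖aⱼ‖²`. Since `B - U = U(H - 1)`
and `H + 1 ⪰ 1`, for every `v` we get
`‖(B - U)v‖ = ‖(H - 1)v‖ ≤ ‖(H + 1)(H - 1)v‖ = ‖(H² - 1)v‖ ≤ ‖H² - 1‖_F ‖v‖`. -/

lemma vecNorm_nonneg {m : ℕ} (v : Fin m → ℝ) : 0 ≤ vecNorm v := Real.sqrt_nonneg _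

lemma vecNorm_sq {m : ℕ} (v : Fin m → ℝ) : vecNorm v ^ 2 = v ⬝ᵥ v := by
  rw [vecNorm, Real.sq_sqrt (by positivity)]
  simp only [dotProduct, sq]

lemma vecNorm_pos {m : ℕ} {v : Fin m → ℝ} (hv : v ≠ 0) : 0 < vecNorm v := by
  refine (vecNorm_nonneg v).lt_of_ne' fun h => hv ?_
  rw [← dotProduct_self_eq_zero, ← vecNorm_sq, h, sq, zero_mul]

lemma vecNorm_mulVec_sq {m n : ℕ} (M : Matrix (Fin m) (Fin n) ℝ) (v : Fin n → ℝ) :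
    vecNorm (M *ᵥ v) ^ 2 = v ⬝ᵥ ((Mᵀ * M) *ᵥ v) := by
  rw [vecNorm_sq, ← mulVec_mulVec, dotProduct_mulVec v, vecMul_transpose]

lemma vecNorm_mulVec_of_transpose_mul_self_eq_one {m n : ℕ} {U : Matrix (Fin m) (Fin n) ℝ}
    (hU : Uᵀ * U = 1) (v : Fin n → ℝ) : vecNorm (U *ᵥ v) = vecNorm v := by
  rw [← pow_left_inj₀ (vecNorm_nonneg _) (vecNorm_nonneg v) two_ne_zero, vecNorm_mulVec_sq, hU,
    one_mulVec, vecNorm_sq]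

lemma vecNorm_mulVec_le_frobNorm_mul {m n : ℕ} (M : Matrix (Fin m) (Fin n) ℝ) (v : Fin n → ℝ) :
    vecNorm (M *ᵥ v) ≤ frobNorm M * vecNorm v := by
  have hCS : ∑ i, (M *ᵥ v) i ^ 2 ≤ (∑ i, ∑ j, M i j ^ 2) * ∑ j, v j ^ 2 := by
    rw [Finset.sum_mul]
    exact Finset.sum_le_sum fun i _ => by
      simpa [mulVec, dotProduct] using Finset.sum_mul_sq_le_sq_mul_sq Finset.univ (M i) v
  rw [vecNorm, vecNorm, frobNorm, ← Real.sqrt_mul (by positivity)]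
  exact Real.sqrt_le_sqrt hCS

lemma frobNorm_le_mul_frobNorm {m n : ℕ} {M N : Matrix (Fin m) (Fin n) ℝ} {c : ℝ} (hc : 0 ≤ c)
    (h : ∀ i j, |M i j| ≤ c * |N i j|) : frobNorm M ≤ c * frobNorm N := by
  have hsq : ∑ i, ∑ j, M i j ^ 2 ≤ c ^ 2 * ∑ i, ∑ j, N i j ^ 2 := by
    simp only [Finset.mul_sum]
    refine Finset.sum_le_sum fun i _ => Finset.sum_le_sum fun j _ => ?_
    rw [← sq_abs, ← sq_abs (N i j), ← mul_pow]
    exact pow_le_pow_left₀ (abs_nonneg _) (h i j) 2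
  rw [frobNorm, frobNorm, ← Real.sqrt_sq hc, ← Real.sqrt_mul (sq_nonneg c)]
  exact Real.sqrt_le_sqrt hsq

lemma exists_vecNorm_eq_one_vecNorm_mulVec_eq_sval {m n : ℕ} (M : Matrix (Fin m) (Fin n) ℝ)
    (k : Fin n) : ∃ v, vecNorm v = 1 ∧ vecNorm (M *ᵥ v) = sval M k := by
  have hS : (Mᵀ * M).IsHermitian := by simpa using isHermitian_conjTranspose_mul_self M
  set i := Tuple.sort hS.eigenvalues k.rev
  set v := (hS.eigenvectorBasis i).ofLp
  have hv : vecNorm v = 1 := by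
    have h := hS.eigenvectorBasis.orthonormal.1 i
    rw [EuclideanSpace.norm_eq] at h
    simpa [vecNorm, v, Real.norm_eq_abs, sq_abs] using h
  refine ⟨v, hv, ?_⟩
  have heig : vecNorm (M *ᵥ v) ^ 2 = hS.eigenvalues i := by
    rw [vecNorm_mulVec_sq, hS.mulVec_eigenvectorBasis, dotProduct_smul, ← vecNorm_sq, hv]
    simp
  change vecNorm (M *ᵥ v) = Real.sqrt (hS.eigenvalues i)
  rw [← heig, Real.sqrt_sq (vecNorm_nonneg _)]

lemma specNorm_le_of_vecNorm_mulVec_le {m n : ℕ} {M : Matrix (Fin m) (Fin n) ℝ} {c : ℝ}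
    (hc : 0 ≤ c) (h : ∀ v, vecNorm (M *ᵥ v) ≤ c * vecNorm v) : specNorm M ≤ c := by
  refine Real.iSup_le (fun k => ?_) hc
  obtain ⟨v, hv, hMv⟩ := exists_vecNorm_eq_one_vecNorm_mulVec_eq_sval M k
  simpa [hMv, hv] using h v

lemma vecNorm_sub_one_mulVec_le {n : ℕ} {H : Matrix (Fin n) (Fin n) ℝ} (hH : H.PosSemidef)
    (v : Fin n → ℝ) : vecNorm ((H - 1) *ᵥ v) ≤ vecNorm ((H * H - 1) *ᵥ v) := by
  have hHt : Hᵀ = H := hH.1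
  have hH2 : (H * H).PosSemidef := by simpa [hHt] using posSemidef_conjTranspose_mul_self H
  have hdiff := ((hH2.add hH).add hH).mul_mul_conjTranspose_same (H - 1)
  rw [show (H - 1) * (H * H + H + H) * (H - 1)ᴴ
      = (H * H - 1)ᵀ * (H * H - 1) - (H - 1)ᵀ * (H - 1) by
    simp only [conjTranspose_eq_transpose_of_trivial, transpose_sub, transpose_mul, hHt,
      transpose_one]
    noncomm_ring] at hdiff
  have h := hdiff.dotProduct_mulVec_nonneg v
  rw [star_trivial, sub_mulVec, dotProduct_sub, sub_nonneg, ← vecNorm_mulVec_sq,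
    ← vecNorm_mulVec_sq] at h
  exact (pow_le_pow_iff_left₀ (vecNorm_nonneg _) (vecNorm_nonneg _) two_ne_zero).1 h

lemma transpose_mul_self_apply_self {m n : ℕ} (A : Matrix (Fin m) (Fin n) ℝ) (j : Fin n) :
    (Aᵀ * A) j j = vecNorm (fun i => A i j) ^ 2 := by
  rw [vecNorm_sq]
  rfl

lemma gram_colScale_apply {m n : ℕ} (A : Matrix (Fin m) (Fin n) ℝ) (i j : Fin n) :
    ((A * colScale A)ᵀ * (A * colScale A)) i j =
      (Aᵀ * A) i j / (vecNorm (fun k => A k i) * vecNorm (fun k => A k j)) := by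
  rw [transpose_mul, colScale, diagonal_transpose, Matrix.mul_assoc, ← Matrix.mul_assoc Aᵀ,
    diagonal_mul, mul_diagonal]
  field_simp

lemma abs_gram_colScale_sub_one_le {m n : ℕ} {A : Matrix (Fin m) (Fin n) ℝ}
    (hcols : ∀ j, (fun i => A i j) ≠ 0) (i j : Fin n) :
    |((A * colScale A)ᵀ * (A * colScale A) - 1 : Matrix (Fin n) (Fin n) ℝ) i j| ≤
      (⨅ k, vecNorm (fun l => A l k) ^ 2)⁻¹ * |(Aᵀ * A - diagonal fun k => (Aᵀ * A) k k) i j| := by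
  have hpos : ∀ k, 0 < vecNorm (fun l => A l k) := fun k => vecNorm_pos (hcols k)
  obtain rfl | hij := eq_or_ne i j
  · have hdiag : ((A * colScale A)ᵀ * (A * colScale A)) i i = 1 := by
      rw [gram_colScale_apply, transpose_mul_self_apply_self, ← sq,
        div_self (pow_pos (hpos i) 2).ne']
    rw [Matrix.sub_apply, hdiag, one_apply_eq, sub_self, abs_zero]
    exact mul_nonneg (inv_nonneg.2 (Real.iInf_nonneg fun _ => sq_nonneg _)) (abs_nonneg _)
  · set μ := ⨅ k, vecNorm (fun l => A l k) ^ 2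
    have hμi : μ ≤ vecNorm (fun l => A l i) ^ 2 := ciInf_le (Finite.bddBelow_range _) i
    have hμj : μ ≤ vecNorm (fun l => A l j) ^ 2 := ciInf_le (Finite.bddBelow_range _) j
    have hμ : 0 < μ := by
      have : Nonempty (Fin n) := ⟨i⟩
      obtain ⟨k, hk⟩ := Finite.exists_min fun k => vecNorm (fun l => A l k) ^ 2
      exact (pow_pos (hpos k) 2).trans_le (le_ciInf hk)
    have hμij : μ ≤ vecNorm (fun l => A l i) * vecNorm (fun l => A l j) := by
      nlinarith [hpos i, hpos j]
    rw [Matrix.sub_apply, one_apply_ne hij, sub_zero, Matrix.sub_apply, diagonal_apply_ne _ hij,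
      sub_zero, gram_colScale_apply, abs_div, abs_of_pos (mul_pos (hpos i) (hpos j)),
      div_eq_inv_mul]
    gcongr

lemma frobNorm_gram_colScale_sub_one_le {m n : ℕ} {A : Matrix (Fin m) (Fin n) ℝ}
    (hcols : ∀ j, (fun i => A i j) ≠ 0) :
    frobNorm ((A * colScale A)ᵀ * (A * colScale A) - 1) ≤
      offF (Aᵀ * A) / ⨅ j, vecNorm (fun i => A i j) ^ 2 := by
  rw [div_eq_inv_mul]
  exact frobNorm_le_mul_frobNorm (inv_nonneg.2 (Real.iInf_nonneg fun _ => sq_nonneg _))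
    (abs_gram_colScale_sub_one_le hcols)

theorem obliquity_le_off_general
    {m n : ℕ}
    (A : Matrix (Fin m) (Fin n) ℝ)
    (hcols : ∀ j, (fun i => A i j) ≠ 0) :
    ∀ (U : Matrix (Fin m) (Fin n) ℝ) (H : Matrix (Fin n) (Fin n) ℝ),
      Uᵀ * U = 1 → H.PosSemidef → A * colScale A = U * H →
      specNorm (A * colScale A - U) ≤
        offF (Aᵀ * A) / ⨅ j, (vecNorm (fun i => A i j)) ^ 2 := by
  intro U H hU hH hpolar
  have hgram : (A * colScale A)ᵀ * (A * colScale A) = H * H := by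
    rw [hpolar, transpose_mul, show Hᵀ = H from hH.1, Matrix.mul_assoc, ← Matrix.mul_assoc Uᵀ,
      hU, Matrix.one_mul]
  have hK := frobNorm_gram_colScale_sub_one_le hcols
  rw [hgram] at hK
  refine specNorm_le_of_vecNorm_mulVec_le ((Real.sqrt_nonneg _).trans hK) fun v => ?_
  calc vecNorm ((A * colScale A - U) *ᵥ v) = vecNorm (U *ᵥ ((H - 1) *ᵥ v)) := by
        rw [hpolar, mulVec_mulVec, Matrix.mul_sub, Matrix.mul_one]
    _ = vecNorm ((H - 1) *ᵥ v) := vecNorm_mulVec_of_transpose_mul_self_eq_one hU _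
    _ ≤ vecNorm ((H * H - 1) *ᵥ v) := vecNorm_sub_one_mulVec_le hH v
    _ ≤ frobNorm (H * H - 1) * vecNorm v := vecNorm_mulVec_le_frobNorm_mul _ v
    _ ≤ _ := mul_le_mul_of_nonneg_right hK (vecNorm_nonneg v)

/-- The obliquity is bounded by the relative `off` quantity:
`obliq(A) ≤ off(AᵀA)/min_j ‖a_j‖₂²`. -/
theorem obliquity_le_off
    {m n : ℕ} (hmn : n ≤ m)
    (A : Matrix (Fin m) (Fin n) ℝ)
    (hcols : ∀ j, (fun i => A i j) ≠ 0) :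
    ∀ (U : Matrix (Fin m) (Fin n) ℝ) (H : Matrix (Fin n) (Fin n) ℝ),
      Uᵀ * U = 1 → H.PosSemidef → A * colScale A = U * H →
      specNorm (A * colScale A - U) ≤
        offF (Aᵀ * A) / ⨅ j, (vecNorm (fun i => A i j)) ^ 2 :=
  obliquity_le_off_general A hcols
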